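/- arXiv:2211.00504 — 4 statements merged into one kernel-verified Lean document; each statement's English description precedes it below -/
import Mathlib

section
/- Suppose x ≥ 0, h and h̲ are real numbers with 0 ≤ h̲ ≤ h, and p(x + h) ≤ 0. Then h ≤ (−p(x)) / (3x^2 + 4x + 10 + h̲·(3x + 2) + h̲^2). -/
/-! The increment of `p` factors as `p (x + h) - p x = h * slope x h`, and the slope is increasing
in `h ≥ 0` when `x ≥ 0`. Hence `h * slope x h̲ ≤ h * slope x h = p (x + h) - p x ≤ -p x`, and one
divides by `slope x h̲ > 0`. -/

namespace DigitByDigit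

def p (x : ℝ) : ℝ := x ^ 3 + 2 * x ^ 2 + 10 * x - 20

/-- The difference quotient `(p (x + h) - p x) / h`, written as a polynomial in `x` and `h`. -/
def slope (x h : ℝ) : ℝ := 3 * x ^ 2 + 4 * x + 10 + h * (3 * x + 2) + h ^ 2

theorem p_add (x h : ℝ) : p (x + h) = p x + h * slope x h := by
  unfold p slope
  ring

theorem slope_pos {x h : ℝ} (hx : 0 ≤ x) (hh : 0 ≤ h) : 0 < slope x h := by
  unfold slope
  positivity

theorem slope_mono {x hl h : ℝ} (hx : 0 ≤ x) (hhl : 0 ≤ hl) (hlh : hl ≤ h) :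
    slope x hl ≤ slope x h := by
  unfold slope
  gcongr

end DigitByDigit

open DigitByDigit

/-- Upper bound on the correction `h` in the digit-by-digit method for
`p(x) = x^3 + 2x^2 + 10x - 20`: if `x ≥ 0`, `0 ≤ h̲ ≤ h` and `p(x+h) ≤ 0`, then
`h ≤ (−p(x)) / (3x^2 + 4x + 10 + h̲(3x+2) + h̲^2)`. -/
theorem digit_by_digit_upper_bound (x h hl : ℝ) (hx : 0 ≤ x)
    (hhl : 0 ≤ hl) (hlh : hl ≤ h)
    (hp : (x + h) ^ 3 + 2 * (x + h) ^ 2 + 10 * (x + h) - 20 ≤ 0) :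
    h ≤ (-(x ^ 3 + 2 * x ^ 2 + 10 * x - 20)) /
        (3 * x ^ 2 + 4 * x + 10 + hl * (3 * x + 2) + hl ^ 2) := by
  change p (x + h) ≤ 0 at hp
  change h ≤ -p x / slope x hl
  rw [le_div_iff₀ (slope_pos hx hhl)]
  calc h * slope x hl ≤ h * slope x h :=
        mul_le_mul_of_nonneg_left (slope_mono hx hhl hlh) (hhl.trans hlh)
    _ = p (x + h) - p x := by rw [p_add]; ring
    _ ≤ -p x := by linarith
end

section
/- Let c, d be real numbers and define q(x) = x^3 + c·x − d. Suppose x ≥ 0, h and h̲ are real numbers with 0 ≤ h̲ ≤ h, the divisor satisfies 3x^2 + 3x·h̲ + c > 0, and q(x + h) = 0. Then h ≤ (−q(x)) / (3x^2 + 3x·h̲ + c). -/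
theorem cubic_shift_eq {R : Type*} [CommRing R] (c d x h : R) :
    (x + h) ^ 3 + c * (x + h) - d =
      (x ^ 3 + c * x - d) + h * (3 * x ^ 2 + 3 * x * h + h ^ 2 + c) := by
  ring

theorem cubic_slope_mono {R : Type*} [CommRing R] [LinearOrder R] [IsStrictOrderedRing R]
    {c x h hl : R} (hx : 0 ≤ x) (hlh : hl ≤ h) :
    3 * x ^ 2 + 3 * x * hl + c ≤ 3 * x ^ 2 + 3 * x * h + h ^ 2 + c := by
  have hlin : 3 * x * hl ≤ 3 * x * h := by gcongr
  linarith [sq_nonneg h]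

/-- Viète / Holdred–Horner upper bound for the depressed cubic `q(x) = x^3 + cx − d`:
if `x ≥ 0`, `0 ≤ h̲ ≤ h`, the divisor `3x^2 + 3x·h̲ + c` is positive and `q(x+h) = 0`,
then `h ≤ (−q(x)) / (3x^2 + 3x·h̲ + c)`. -/
theorem viete_upper_bound (c d x h hl : ℝ) (hx : 0 ≤ x)
    (hhl : 0 ≤ hl) (hlh : hl ≤ h)
    (hdiv : 0 < 3 * x ^ 2 + 3 * x * hl + c)
    (hq : (x + h) ^ 3 + c * (x + h) - d = 0) :
    h ≤ (-(x ^ 3 + c * x - d)) / (3 * x ^ 2 + 3 * x * hl + c) := by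
  rw [le_div_iff₀ hdiv]
  calc h * (3 * x ^ 2 + 3 * x * hl + c)
      ≤ h * (3 * x ^ 2 + 3 * x * h + h ^ 2 + c) :=
        mul_le_mul_of_nonneg_left (cubic_slope_mono hx hlh) (hhl.trans hlh)
    _ = -(x ^ 3 + c * x - d) := by linear_combination hq - cubic_shift_eq c d x h
end

section
/- Let x₅ = 1 + 22/60 + 7/60^2 + 42/60^3 + 33/60^4 + 4/60^5. Then p(x₅ + 38/60^6) < 0 < p(x₅ + 39/60^6); that is, 38 is the largest natural number α with p(x₅ + α/60^6) ≤ 0, so the correct sixth fractional sexagesimal digit of the root is 38. -/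
/-! A cubic `x ^ 3 + b x ^ 2 + c x + d` with `b ^ 2 < 3 c` has everywhere positive derivative, so `p`
is strictly increasing. Hence `α ↦ p (x₅ + α / 60 ^ 6)` is increasing on `ℕ`, and the digit is the last
`α` before the sign change, which two exact rational evaluations locate between `38` and `39`. -/

theorem strictMono_cubic {b c d : ℝ} (hbc : b ^ 2 < 3 * c) :
    StrictMono fun x : ℝ => x ^ 3 + b * x ^ 2 + c * x + d := by
  intro x y hxy
  -- `x² + xy + y² + b(x + y) + c` is minimal at `x = y = -b/3`, where it equals `c - b²/3 > 0`.
  have hquad : 0 < x ^ 2 + x * y + y ^ 2 + b * (x + y) + c := by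
    nlinarith [sq_nonneg (x - y), sq_nonneg (x + y + 2 * b / 3)]
  have hfactor : (y ^ 3 + b * y ^ 2 + c * y + d) - (x ^ 3 + b * x ^ 2 + c * x + d) =
      (y - x) * (x ^ 2 + x * y + y ^ 2 + b * (x + y) + c) := by ring
  have := mul_pos (sub_pos.mpr hxy) hquad
  simp only
  linarith

theorem isGreatest_nat_of_monotone {f : ℝ → ℝ} (hf : Monotone f) {x c : ℝ} (hc : 0 < c) {n : ℕ}
    (hn : f (x + n / c) ≤ 0) (hn_succ : 0 < f (x + (n + 1) / c)) :
    IsGreatest {m : ℕ | f (x + m / c) ≤ 0} n := by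
  refine ⟨hn, fun m hm => ?_⟩
  by_contra! hlt
  have hle : ((n : ℝ) + 1) / c ≤ m / c := by
    gcongr
    exact_mod_cast hlt
  exact (hm.trans_lt hn_succ).not_ge (hf (add_le_add_right hle x))

/-- For `p(x) = x^3 + 2x^2 + 10x - 20` and
`x₅ = 1 + 22/60 + 7/60^2 + 42/60^3 + 33/60^4 + 4/60^5`:
`p(x₅ + 38/60^6) < 0 < p(x₅ + 39/60^6)`, i.e. `38` is the largest natural `α`
with `p(x₅ + α/60^6) ≤ 0`, so the correct sixth fractional sexagesimal digit is 38. -/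
theorem correct_sixth_sexagesimal_digit :
    let p : ℝ → ℝ := fun x => x ^ 3 + 2 * x ^ 2 + 10 * x - 20
    let x₅ : ℝ := 1 + 22 / 60 + 7 / 60 ^ 2 + 42 / 60 ^ 3 + 33 / 60 ^ 4 + 4 / 60 ^ 5
    (p (x₅ + 38 / 60 ^ 6) < 0) ∧ (0 < p (x₅ + 39 / 60 ^ 6)) ∧
    IsGreatest {α : ℕ | p (x₅ + α / 60 ^ 6) ≤ 0} 38 := by
  intro p x₅
  have hp : StrictMono p := by
    simp only [p, sub_eq_add_neg]
    exact strictMono_cubic (by norm_num)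
  have h38 : p (x₅ + 38 / 60 ^ 6) < 0 := by norm_num [p, x₅]
  have h39 : 0 < p (x₅ + 39 / 60 ^ 6) := by norm_num [p, x₅]
  refine ⟨h38, h39, isGreatest_nat_of_monotone hp.monotone (by positivity) ?_ ?_⟩
  · exact_mod_cast h38.le
  · exact_mod_cast h39
end

section
/- Let a, b, c be real numbers with b > 0 and c > 0, and let x > 0 with x ≠ c. If the point (x, y) with y = bc/x lies on the circle (x − (c−a)/2)^2 + (y − b)^2 = ((a+c)/2)^2, then x^3 + a·x^2 + b^2·x = b^2·c. -/
/-!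
The circle is the one on the diameter from `(-a, b)` to `(c, b)`, so a point `(x, y)` lies on it
iff `(x - c) (x + a) + (y - b)^2 = 0`. On the hyperbola `xy = bc` we have `y - b = b (c - x) / x`,
and the left side becomes `(x - c) (x^3 + a x^2 + b^2 x - b^2 c) / x^2`. The factor `x - c`
accounts for the second intersection point `(c, b)`, so every other intersection solves the cubic.
-/

theorem khayyam_circle_sub_hyperbola_eq (a b c : ℝ) {x : ℝ} (hx : x ≠ 0) :
    (x - (c - a) / 2) ^ 2 + (b * c / x - b) ^ 2 - ((a + c) / 2) ^ 2 =
      (x - c) * (x ^ 3 + a * x ^ 2 + b ^ 2 * x - b ^ 2 * c) / x ^ 2 := by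
  field_simp
  ring

theorem khayyam_geometric_solution_general (a b c x : ℝ)
    (hx : 0 < x) (hxc : x ≠ c)
    (hcircle : (x - (c - a) / 2) ^ 2 + (b * c / x - b) ^ 2 = ((a + c) / 2) ^ 2) :
    x ^ 3 + a * x ^ 2 + b ^ 2 * x = b ^ 2 * c := by
  have h := khayyam_circle_sub_hyperbola_eq a b c hx.ne'
  rw [hcircle, sub_self, eq_comm, div_eq_zero_iff, mul_eq_zero] at h
  rcases h with (h | h) | h
  · exact absurd (sub_eq_zero.mp h) hxc
  · exact sub_eq_zero.mp h
  · exact absurd (pow_eq_zero_iff two_ne_zero |>.mp h) hx.ne'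

/-- Omar Khayyam's geometric solution of `x^3 + ax^2 + b^2 x = b^2 c`: if `b > 0`,
`c > 0`, `x > 0`, `x ≠ c`, `y = bc/x`, and `(x, y)` lies on the circle
`(x − (c−a)/2)^2 + (y − b)^2 = ((a+c)/2)^2`, then `x^3 + ax^2 + b^2 x = b^2 c`. -/
theorem khayyam_geometric_solution (a b c x : ℝ) (hb : 0 < b) (hc : 0 < c)
    (hx : 0 < x) (hxc : x ≠ c)
    (hcircle : (x - (c - a) / 2) ^ 2 + (b * c / x - b) ^ 2 = ((a + c) / 2) ^ 2) :
    x ^ 3 + a * x ^ 2 + b ^ 2 * x = b ^ 2 * c :=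
  khayyam_geometric_solution_general a b c x hx hxc hcircle
end
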